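/- arXiv:1511.09105 — 3 statements merged into one kernel-verified Lean document; each statement's English description precedes it below -/
import Mathlib

section
/- If b2, b3, b4' are non-negative integers satisfying -2*b3 + 20*b2 + 92 = b2*(b2+1) + 2*b4', then b2 ≤ 23. -/
theorem stmt0 (b2 b3 b4' : ℕ)
    (h : -2 * (b3 : ℤ) + 20 * b2 + 92 = b2 * (b2 + 1) + 2 * b4') :
    b2 ≤ 23 := by
  have h2 : (b2 : ℤ) ≤ 23 := by nlinarith [Int.natCast_nonneg b3, Int.natCast_nonneg b4', Int.natCast_nonneg b2]
  exact_mod_cast h2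
end

section
/- If b2, b3, c, d, e are non-negative integers satisfying 36*(b2*(b2+1)/2 + c*b2 + d) - 96*b3 + 180*b2 + 420 = 6*(b2*(b2+1)*(b2+2)/6 + c*(b2^2 - b2 + 2)/2 + d*b2 + e), then b2 ≤ 23. -/
theorem stmt3 (b2 b3 c d e : ℕ)
    (h : 36 * ((b2 : ℤ) * (b2 + 1) / 2 + c * b2 + d) - 96 * b3 + 180 * b2 + 420
        = 6 * ((b2 : ℤ) * (b2 + 1) * (b2 + 2) / 6 + c * ((b2 : ℤ) ^ 2 - b2 + 2) / 2 + d * b2 + e)) :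
    b2 ≤ 23 := by
  by_contra hb
  push_neg at hb
  have hb' : (24:ℤ) ≤ (b2:ℤ) := by exact_mod_cast hb
  obtain ⟨k, hk⟩ : (2:ℤ) ∣ (b2:ℤ) * (b2 + 1) := (Int.even_mul_succ_self (b2:ℤ)).two_dvd
  obtain ⟨m, hm⟩ : (2:ℤ) ∣ ((b2:ℤ) ^ 2 - b2 + 2) := by
    obtain ⟨t, ht⟩ : ∃ t : ℤ, (b2:ℤ) = 2*t ∨ (b2:ℤ) = 2*t+1 := ⟨(b2:ℤ)/2, by omega⟩
    rcases ht with ht | ht <;> rw [ht]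
    · exact ⟨2*t^2 - t + 1, by ring⟩
    · exact ⟨2*t^2 + t + 1, by ring⟩
  obtain ⟨n, hn⟩ : (6:ℤ) ∣ (b2:ℤ) * (b2 + 1) * (b2 + 2) := by
    obtain ⟨t, ht⟩ : ∃ t : ℤ, (b2:ℤ) = 6*t ∨ (b2:ℤ) = 6*t+1 ∨ (b2:ℤ) = 6*t+2 ∨
        (b2:ℤ) = 6*t+3 ∨ (b2:ℤ) = 6*t+4 ∨ (b2:ℤ) = 6*t+5 := ⟨(b2:ℤ)/6, by omega⟩
    rcases ht with ht | ht | ht | ht | ht | ht <;> rw [ht]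
    · exact ⟨t*(6*t+1)*(6*t+2), by ring⟩
    · exact ⟨(6*t+1)*(3*t+1)*(2*t+1), by ring⟩
    · exact ⟨(3*t+1)*(2*t+1)*(6*t+4), by ring⟩
    · exact ⟨(2*t+1)*(3*t+2)*(6*t+5), by ring⟩
    · exact ⟨(6*t+4)*(6*t+5)*(t+1), by ring⟩
    · exact ⟨(6*t+5)*(t+1)*(6*t+7), by ring⟩
  rw [hn, hk, hm, Int.mul_ediv_cancel_left _ two_ne_zero,
    Int.mul_ediv_cancel_left _ (by norm_num : (6:ℤ) ≠ 0)] at h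
  rw [show ((c:ℤ)) * (2*m) = 2 * ((c:ℤ)*m) by ring, Int.mul_ediv_cancel_left _ two_ne_zero] at h
  have hc : (0:ℤ) ≤ c := Int.natCast_nonneg c
  have hd : (0:ℤ) ≤ d := Int.natCast_nonneg d
  have he : (0:ℤ) ≤ e := Int.natCast_nonneg e
  have hb3 : (0:ℤ) ≤ b3 := Int.natCast_nonneg b3
  have hm' : 2 * m = (b2:ℤ)^2 - b2 + 2 := hm.symm
  have hk' : 2 * k = (b2:ℤ) * (b2+1) := hk.symm
  have hn' : 6 * n = (b2:ℤ) * (b2+1) * (b2+2) := hn.symm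
  nlinarith [mul_nonneg hc (by nlinarith : (0:ℤ) ≤ (b2:ℤ)^2 - 13*b2 + 2),
    mul_nonneg hd (by linarith : (0:ℤ) ≤ (b2:ℤ) - 6), sq_nonneg ((b2:ℤ) - 24)]
end

section
/- If b2 ≥ 24 is a natural number, then there exist no non-negative integers b3, c, d, e such that 18*(b2*(b2+1)/2 + c*b2 + d) - 48*b3 + 90*b2 + 210 = 3*(b2*(b2+1)*(b2+2)/6 + c*(b2^2-b2+2)/2 + d*b2 + e). -/
theorem stmt13 (b2 : ℕ) (hb : b2 ≥ 24) :
    ¬ ∃ b3 c d e : ℕ,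
      18 * ((b2 : ℤ) * (b2 + 1) / 2 + c * b2 + d) - 48 * b3 + 90 * b2 + 210
        = 3 * ((b2 : ℤ) * (b2 + 1) * (b2 + 2) / 6 + c * ((b2 : ℤ) ^ 2 - b2 + 2) / 2
            + d * b2 + e) := by
  rintro ⟨b3, c, d, e, h⟩
  set n : ℤ := (b2 : ℤ) with hn
  have hn24 : (24 : ℤ) ≤ n := by rw [hn]; exact_mod_cast hb
  have hb3 : (0 : ℤ) ≤ (b3 : ℤ) := Int.natCast_nonneg _
  have hc : (0 : ℤ) ≤ (c : ℤ) := Int.natCast_nonneg _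
  have hd : (0 : ℤ) ≤ (d : ℤ) := Int.natCast_nonneg _
  have he : (0 : ℤ) ≤ (e : ℤ) := Int.natCast_nonneg _
  have h2 : (2 : ℤ) ∣ n * (n + 1) := (Int.even_mul_succ_self n).two_dvd
  have h2' : (2 : ℤ) ∣ (c : ℤ) * (n ^ 2 - n + 2) := by
    have : (2 : ℤ) ∣ n ^ 2 - n + 2 := by
      have := (Int.even_mul_succ_self (n - 1)).two_dvd
      have h' : (n - 1) * (n - 1 + 1) = n ^ 2 - n := by ring
      rw [h'] at this
      omega
    exact Dvd.dvd.mul_left this _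
  have h6 : (6 : ℤ) ∣ n * (n + 1) * (n + 2) := by
    have key : ∀ x : ZMod 6, x * (x + 1) * (x + 2) = 0 := by decide
    have : ((n * (n + 1) * (n + 2) : ℤ) : ZMod 6) = 0 := by push_cast; exact key _
    exact (ZMod.intCast_zmod_eq_zero_iff_dvd _ 6).mp this
  have eA : n * (n + 1) / 2 * 2 = n * (n + 1) := Int.ediv_mul_cancel h2
  have eB : n * (n + 1) * (n + 2) / 6 * 6 = n * (n + 1) * (n + 2) :=
    Int.ediv_mul_cancel h6
  have eC : (c : ℤ) * (n ^ 2 - n + 2) / 2 * 2 = (c : ℤ) * (n ^ 2 - n + 2) :=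
    Int.ediv_mul_cancel h2'
  set A := n * (n + 1) / 2
  set B := n * (n + 1) * (n + 2) / 6
  set C := (c : ℤ) * (n ^ 2 - n + 2) / 2
  nlinarith [mul_nonneg hc (by nlinarith : (0 : ℤ) ≤ 3 * n ^ 2 - 39 * n + 6),
    mul_nonneg hd (by linarith : (0 : ℤ) ≤ 3 * n - 18),
    mul_nonneg (mul_nonneg (by linarith : (0:ℤ) ≤ n - 24) (by linarith : (0:ℤ) ≤ n)) (by linarith : (0:ℤ) ≤ n + 1),
    he, hb3]
end
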